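/- For all integers $n \geq 1$ and $k$ with $1 \leq k \leq n$, there holds $[k]^2 \binom{2n}{n+k}_q q^{n-k} = [n]^2 \binom{2n}{n+k}_q - [2n][2n-1]\binom{2n-2}{n+k-1}_q$ as polynomials in $q$. -/

import Mathlib

/-! The difference `[n]² - q^(n-k) [k]²` factors as `[n+k][n-k]`, as one sees after multiplying
by `(q - 1)²` and expanding the geometric sums. The two `q`-absorption identities
`[m+1] [m choose j] = [j+1] [m+1 choose j+1]` and `[m+1] [m choose j] = [m+1-j] [m+1 choose j]`,
proved through `q`-factorials, turn `[2n][2n-1] [2n-2 choose n+k-1]` into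
`[n+k][n-k] [2n choose n+k]`; subtracting the two identities gives the theorem. -/

open Polynomial Finset

/-- The `q`-integer `[n] = 1 + q + ⋯ + q^(n-1)` as a polynomial in `ℤ[q]`. -/
noncomputable def qint (n : ℕ) : Polynomial ℤ := ∑ i ∈ Finset.range n, Polynomial.X ^ i

/-- The Gaussian binomial coefficient `[n choose k]_q` in `ℤ[q]`, via the `q`-Pascal rule. -/
noncomputable def qbinom : ℕ → ℕ → Polynomial ℤ
  | _, 0 => 1
  | 0, _ + 1 => 0
  | n + 1, k + 1 => qbinom n k + Polynomial.X ^ (k + 1) * qbinom n (k + 1)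

lemma X_sub_one_mul_qint (n : ℕ) : (X - 1) * qint n = X ^ n - 1 := mul_geom_sum X n

lemma qint_add (a b : ℕ) : qint (a + b) = qint a + X ^ a * qint b := by
  simp only [qint, sum_range_add, pow_add, mul_sum]

lemma qint_ne_zero {n : ℕ} (hn : n ≠ 0) : qint n ≠ 0 := fun h => by
  simpa [qint, hn] using congrArg (eval 1) h

lemma qbinom_zero_right (n : ℕ) : qbinom n 0 = 1 := by cases n <;> rfl

lemma qbinom_succ_succ (n k : ℕ) :
    qbinom (n + 1) (k + 1) = qbinom n k + X ^ (k + 1) * qbinom n (k + 1) := rfl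

lemma qbinom_eq_zero_of_lt : ∀ {n k : ℕ}, n < k → qbinom n k = 0
  | 0, _ + 1, _ => rfl
  | n + 1, k + 1, h => by
    rw [qbinom_succ_succ, qbinom_eq_zero_of_lt (by omega), qbinom_eq_zero_of_lt (by omega),
      mul_zero, add_zero]

lemma qbinom_self : ∀ n : ℕ, qbinom n n = 1
  | 0 => rfl
  | n + 1 => by rw [qbinom_succ_succ, qbinom_self n, qbinom_eq_zero_of_lt n.lt_succ_self]; ring

noncomputable def qfact : ℕ → Polynomial ℤ
  | 0 => 1
  | n + 1 => qfact n * qint (n + 1)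

lemma qfact_succ (n : ℕ) : qfact (n + 1) = qfact n * qint (n + 1) := rfl

lemma qfact_ne_zero : ∀ n : ℕ, qfact n ≠ 0
  | 0 => one_ne_zero
  | n + 1 => mul_ne_zero (qfact_ne_zero n) (qint_ne_zero n.succ_ne_zero)

lemma add_qbinom_mul_qfact_mul_qfact : ∀ i j : ℕ,
    qbinom (i + j) j * qfact i * qfact j = qfact (i + j)
  | 0, j => by simp [qbinom_self, qfact]
  | i + 1, 0 => by simp [qbinom_zero_right, qfact]
  | i + 1, j + 1 => by
    have h₁ := add_qbinom_mul_qfact_mul_qfact (i + 1) j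
    have h₂ := add_qbinom_mul_qfact_mul_qfact i (j + 1)
    have hsplit := qint_add (j + 1) (i + 1)
    rw [show i + 1 + j = i + j + 1 by omega, qfact_succ i] at h₁
    rw [show i + (j + 1) = i + j + 1 by omega, qfact_succ j] at h₂
    rw [show j + 1 + (i + 1) = i + j + 1 + 1 by omega] at hsplit
    rw [show i + 1 + (j + 1) = i + j + 1 + 1 by omega, qbinom_succ_succ, qfact_succ (i + j + 1), hsplit, qfact_succ i, qfact_succ j]
    linear_combination qint (j + 1) * h₁ + X ^ (j + 1) * qint (i + 1) * h₂

lemma qint_add_one_mul_qbinom_eq (n k : ℕ) :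
    qint (n + 1) * qbinom n k = qbinom (n + 1) (k + 1) * qint (k + 1) := by
  rcases lt_or_ge n k with hnk | hkn
  · rw [qbinom_eq_zero_of_lt hnk, qbinom_eq_zero_of_lt (by omega), mul_zero, zero_mul]
  obtain ⟨c, rfl⟩ := Nat.exists_eq_add_of_le' hkn
  have h₁ := add_qbinom_mul_qfact_mul_qfact c k
  have h₂ := add_qbinom_mul_qfact_mul_qfact c (k + 1)
  rw [← add_assoc, qfact_succ, qfact_succ (c + k)] at h₂
  refine mul_right_cancel₀ (mul_ne_zero (qfact_ne_zero c) (qfact_ne_zero k)) ?_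
  linear_combination qint (c + k + 1) * h₁ - h₂

lemma qbinom_mul_qint_add_one_eq (n k : ℕ) :
    qbinom n k * qint (n + 1) = qbinom (n + 1) k * qint (n + 1 - k) := by
  rcases lt_or_ge n k with hnk | hkn
  · rw [qbinom_eq_zero_of_lt hnk, show n + 1 - k = 0 by omega]
    simp [qint]
  obtain ⟨c, rfl⟩ := Nat.exists_eq_add_of_le' hkn
  have h₁ := add_qbinom_mul_qfact_mul_qfact c k
  have h₂ := add_qbinom_mul_qfact_mul_qfact (c + 1) k
  rw [show c + 1 + k = c + k + 1 by omega, qfact_succ, qfact_succ (c + k)] at h₂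
  rw [show c + k + 1 - k = c + 1 by omega]
  refine mul_right_cancel₀ (mul_ne_zero (qfact_ne_zero c) (qfact_ne_zero k)) ?_
  linear_combination qint (c + k + 1) * h₁ - h₂

lemma qint_sq_sub_X_pow_mul_qint_sq {n k : ℕ} (hkn : k ≤ n) :
    qint n ^ 2 - X ^ (n - k) * qint k ^ 2 = qint (n + k) * qint (n - k) := by
  obtain ⟨b, rfl⟩ := Nat.exists_eq_add_of_le hkn
  rw [Nat.add_sub_cancel_left]
  refine mul_left_cancel₀ (pow_ne_zero 2 (X_sub_C_ne_zero (1 : ℤ))) ?_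
  rw [C_1]
  calc (X - 1) ^ 2 * (qint (k + b) ^ 2 - X ^ b * qint k ^ 2)
      = ((X - 1) * qint (k + b)) ^ 2 - X ^ b * ((X - 1) * qint k) ^ 2 := by ring
    _ = (X ^ (k + b) - 1) ^ 2 - X ^ b * (X ^ k - 1) ^ 2 := by
      rw [X_sub_one_mul_qint, X_sub_one_mul_qint]
    _ = (X ^ (k + b + k) - 1) * (X ^ b - 1) := by ring
    _ = (X - 1) ^ 2 * (qint (k + b + k) * qint b) := by
      rw [← X_sub_one_mul_qint, ← X_sub_one_mul_qint]; ring

lemma qint_mul_qint_mul_qbinom (m j : ℕ) :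
    qint (m + 2) * qint (m + 1) * qbinom m j
      = qint (j + 1) * qint (m + 1 - j) * qbinom (m + 2) (j + 1) := by
  have hright := qbinom_mul_qint_add_one_eq m j
  have hleft := qint_add_one_mul_qbinom_eq (m + 1) j
  linear_combination qint (m + 2) * hright + qint (m + 1 - j) * hleft

theorem stmt_1 (n k : ℕ) (hk1 : 1 ≤ k) (hkn : k ≤ n) :
    (qint k) ^ 2 * qbinom (2 * n) (n + k) * Polynomial.X ^ (n - k)
      = (qint n) ^ 2 * qbinom (2 * n) (n + k)
        - qint (2 * n) * qint (2 * n - 1) * qbinom (2 * n - 2) (n + k - 1) := by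
  have hsq := qint_sq_sub_X_pow_mul_qint_sq hkn
  have habs := qint_mul_qint_mul_qbinom (2 * n - 2) (n + k - 1)
  rw [show 2 * n - 2 + 2 = 2 * n by omega, show 2 * n - 2 + 1 = 2 * n - 1 by omega,
    show n + k - 1 + 1 = n + k by omega, show 2 * n - 1 - (n + k - 1) = n - k by omega] at habs
  linear_combination habs - qbinom (2 * n) (n + k) * hsq
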